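/- arXiv:2604.18826 — 2 statements merged into one kernel-verified Lean document; each statement's English description precedes it below -/
import Mathlib

section
/- Single-step dominance at a refueling node in the backward labeling algorithm: let μ ∈ (0,1], R ≥ 0, C ∈ ℝ, λ ≥ 0, w_2 ≥ 0, w_4 ≥ 0. Define the refueling amount r(u) = min(R, u/μ − C) and the backward refueling step (φ, u) ↦ (φ − w_2 − r(u)·(λ + w_4), u/μ − r(u)). Then (i) u/μ − r(u) = max(u/μ − R, C), so the post-step mass is a nondecreasing function of u, and r(u) is a nondecreasing function of u; (ii) for two labels with φ_1 ≤ φ_2 and u_1 ≥ u_2, the resulting labels satisfy φ_1′ ≤ φ_2′ and u_1′ ≥ u_2′. -/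
/-! Writing `a = u / μ`, the post-refuel mass `a - min R (a - C)` equals `max (a - R) C`, which
is monotone in `a`, and so is the refuel amount `min R (a - C)`; since `u ↦ u / μ` is monotone
for `μ > 0`, both are monotone in `u`. A larger refuel amount costs more reward because the price
`λ + w₄` is nonnegative, so a dominating label stays dominating. -/

section LinearOrderedAddCommGroup

variable {α : Type*} [AddCommGroup α] [LinearOrder α] [IsOrderedAddMonoid α]

theorem sub_min_sub_eq_max (a b c : α) : a - min b (a - c) = max (a - b) c := by
  rw [← max_sub_sub_left, sub_sub_cancel]

variable {β : Type*} [Preorder β] {f : β → α}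

theorem Monotone.min_const_sub (hf : Monotone f) (b c : α) :
    Monotone fun x => min b (f x - c) :=
  fun _ _ hxy => min_le_min_left b (sub_le_sub_right (hf hxy) c)

theorem Monotone.sub_min_const_sub (hf : Monotone f) (b c : α) :
    Monotone fun x => f x - min b (f x - c) := by
  intro x y hxy
  simp only [sub_min_sub_eq_max]
  exact max_le_max_right c (sub_le_sub_right (hf hxy) b)

end LinearOrderedAddCommGroup

theorem refuel_step_preserves_dominance_general
    (μ R C lam w_2 w_4 : ℝ)
    (hμ0 : 0 < μ) (hlam : 0 ≤ lam)
    (hw4 : 0 ≤ w_4) :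
    -- (i) post-step mass formula and monotonicity
    (∀ u : ℝ, u / μ - min R (u / μ - C) = max (u / μ - R) C)
    ∧ (∀ u u' : ℝ, u ≤ u' →
        u / μ - min R (u / μ - C) ≤ u' / μ - min R (u' / μ - C))
    ∧ (∀ u u' : ℝ, u ≤ u' → min R (u / μ - C) ≤ min R (u' / μ - C))
    -- (ii) dominance preservation
    ∧ (∀ φ_1 u_1 φ_2 u_2 : ℝ, φ_1 ≤ φ_2 → u_1 ≥ u_2 →
        φ_1 - w_2 - min R (u_1 / μ - C) * (lam + w_4)
            ≤ φ_2 - w_2 - min R (u_2 / μ - C) * (lam + w_4)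
        ∧ u_1 / μ - min R (u_1 / μ - C) ≥ u_2 / μ - min R (u_2 / μ - C)) := by
  have hdiv : Monotone (· / μ : ℝ → ℝ) := monotone_div_right_of_nonneg hμ0.le
  have hmass := hdiv.sub_min_const_sub R C
  have hamount := hdiv.min_const_sub R C
  refine ⟨fun u => sub_min_sub_eq_max _ _ _, fun _ _ h => hmass h, fun _ _ h => hamount h,
    fun φ_1 u_1 φ_2 u_2 hφ hu => ⟨?_, hmass hu⟩⟩
  have hcost := mul_le_mul_of_nonneg_right (hamount hu) (add_nonneg hlam hw4)
  linarith

/-- Single-step dominance at a refueling node in the backward labeling algorithm.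
With refueling amount `r(u) = min(R, u/μ − C)` and backward refueling step
`(φ, u) ↦ (φ − w₂ − r(u)(λ + w₄), u/μ − r(u))`:
(i) the post-step mass is `max(u/μ − R, C)`, hence nondecreasing in `u`, and `r(u)`
is nondecreasing in `u`; (ii) the step preserves the dominance relation
`φ₁ ≤ φ₂ ∧ u₁ ≥ u₂`. -/
theorem refuel_step_preserves_dominance
    (μ R C lam w_2 w_4 : ℝ)
    (hμ0 : 0 < μ) (hμ1 : μ ≤ 1) (hR : 0 ≤ R) (hlam : 0 ≤ lam)
    (hw2 : 0 ≤ w_2) (hw4 : 0 ≤ w_4) :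
    -- (i) post-step mass formula and monotonicity
    (∀ u : ℝ, u / μ - min R (u / μ - C) = max (u / μ - R) C)
    ∧ (∀ u u' : ℝ, u ≤ u' →
        u / μ - min R (u / μ - C) ≤ u' / μ - min R (u' / μ - C))
    ∧ (∀ u u' : ℝ, u ≤ u' → min R (u / μ - C) ≤ min R (u' / μ - C))
    -- (ii) dominance preservation
    ∧ (∀ φ_1 u_1 φ_2 u_2 : ℝ, φ_1 ≤ φ_2 → u_1 ≥ u_2 →
        φ_1 - w_2 - min R (u_1 / μ - C) * (lam + w_4)
            ≤ φ_2 - w_2 - min R (u_2 / μ - C) * (lam + w_4)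
        ∧ u_1 / μ - min R (u_1 / μ - C) ≥ u_2 / μ - min R (u_2 / μ - C)) :=
  refuel_step_preserves_dominance_general μ R C lam w_2 w_4 hμ0 hlam hw4
end

section
/- Dominance is preserved along any common remaining path, so pruning a dominated label preserves optimality: consider any finite sequence of backward steps, each being either a target step with parameters μ ∈ (0,1], s ≥ 0, p, w_1 ∈ ℝ, mapping (φ, u) ↦ (φ + (p − w_1), u/μ + s), or a refueling step with parameters μ ∈ (0,1], R ≥ 0, C ∈ ℝ, λ ≥ 0, w_2 ≥ 0, w_4 ≥ 0, mapping (φ, u) ↦ (φ − w_2 − r(u)(λ + w_4), u/μ − r(u)) with r(u) = min(R, u/μ − C). If two labels satisfy φ_1 ≤ φ_2 and u_1 ≥ u_2, then after applying the entire sequence to both, the resulting labels satisfy φ_1′ ≤ φ_2′ and u_1′ ≥ u_2′; consequently, for every λ ≥ 0 and every constant κ ∈ ℝ, the final reduced costs satisfy φ_1′ − λ(u_1′ − κ) ≤ φ_2′ − λ(u_2′ − κ). -/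
/-- A backward step of the labeling algorithm: either a target step with parameters
`(μ, s, p, w₁)` or a refueling step with parameters `(μ, R, C, λ, w₂, w₄)`. -/
inductive BackwardStep where
  | target (μ s p w1 : ℝ) : BackwardStep
  | refuel (μ R C lam w2 w4 : ℝ) : BackwardStep

/-- Parameter validity of a backward step: mass ratios lie in `(0,1]`, the payload
mass, remaining capacity, weighting factor and dual prices are nonnegative. -/
def BackwardStep.Valid : BackwardStep → Prop
  | .target μ s _ _ => 0 < μ ∧ μ ≤ 1 ∧ 0 ≤ s
  | .refuel μ R _ lam w2 w4 => 0 < μ ∧ μ ≤ 1 ∧ 0 ≤ R ∧ 0 ≤ lam ∧ 0 ≤ w2 ∧ 0 ≤ w4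

/-- Applying one backward step to a label `(φ, u)`:
a target step maps `(φ, u) ↦ (φ + (p − w₁), u/μ + s)`; a refueling step refuels
`r(u) = min(R, u/μ − C)` and maps `(φ, u) ↦ (φ − w₂ − r(u)(λ + w₄), u/μ − r(u))`. -/
noncomputable def BackwardStep.apply : BackwardStep → ℝ × ℝ → ℝ × ℝ
  | .target μ s p w1, (φ, u) => (φ + (p - w1), u / μ + s)
  | .refuel μ R C lam w2 w4, (φ, u) =>
      (φ - w2 - min R (u / μ - C) * (lam + w4), u / μ - min R (u / μ - C))

/-- Applying a finite sequence of backward steps to a label. -/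
noncomputable def applyBackwardSteps (L : List BackwardStep) (x : ℝ × ℝ) : ℝ × ℝ :=
  L.foldl (fun x step => step.apply x) x

/-!
Each backward step is monotone for the dominance order (reward up, mass down). For a target
step this is immediate. For a refueling step the refuelled amount `r(u)` grows with `u`, which
only lowers the reward, and the new mass `u/μ − min(R, u/μ − C) = max(u/μ − R, C)` is still
nondecreasing in `u`. Finally the reduced cost `φ − λ(u − κ)` is monotone for dominance
whenever `λ ≥ 0`.
-/

def IsDominatedBy (x y : ℝ × ℝ) : Prop := x.1 ≤ y.1 ∧ y.2 ≤ x.2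

theorem sub_min_sub_eq_max_s8 {α : Type*} [AddCommGroup α] [LinearOrder α] [IsOrderedAddMonoid α]
    (x R C : α) : x - min R (x - C) = max (x - R) C := by
  rw [← max_sub_sub_left, sub_sub_cancel]

namespace BackwardStep

theorem apply_refuel_snd (μ R C lam w2 w4 u φ : ℝ) :
    ((refuel μ R C lam w2 w4).apply (φ, u)).2 = max (u / μ - R) C :=
  sub_min_sub_eq_max_s8 _ _ _

theorem isDominatedBy_apply {step : BackwardStep} (hv : step.Valid) {x y : ℝ × ℝ}
    (hxy : IsDominatedBy x y) : IsDominatedBy (step.apply x) (step.apply y) := by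
  obtain ⟨φ1, u1⟩ := x
  obtain ⟨φ2, u2⟩ := y
  obtain ⟨hφ, hu⟩ := hxy
  cases step with
  | target μ s p w1 =>
    obtain ⟨hμ, -, -⟩ := hv
    exact ⟨by simpa [apply] using hφ, by simp only [apply]; gcongr⟩
  | refuel μ R C lam w2 w4 =>
    obtain ⟨hμ, -, -, hlam, -, hw4⟩ := hv
    have hmass : u2 / μ ≤ u1 / μ := by gcongr
    refine ⟨?_, ?_⟩
    · have hfuel : min R (u2 / μ - C) * (lam + w4) ≤ min R (u1 / μ - C) * (lam + w4) := by
        gcongr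
      simp only [apply]
      linarith
    · rw [apply_refuel_snd, apply_refuel_snd]
      gcongr

end BackwardStep

theorem isDominatedBy_applyBackwardSteps {L : List BackwardStep} (hL : ∀ step ∈ L, step.Valid)
    {x y : ℝ × ℝ} (hxy : IsDominatedBy x y) :
    IsDominatedBy (applyBackwardSteps L x) (applyBackwardSteps L y) := by
  induction L generalizing x y with
  | nil => exact hxy
  | cons step L ih =>
    exact ih (fun s hs => hL s (List.mem_cons_of_mem step hs))
      (BackwardStep.isDominatedBy_apply (hL step List.mem_cons_self) hxy)

theorem IsDominatedBy.reducedCost_le {x y : ℝ × ℝ} (hxy : IsDominatedBy x y) {lam : ℝ}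
    (hlam : 0 ≤ lam) (κ : ℝ) : x.1 - lam * (x.2 - κ) ≤ y.1 - lam * (y.2 - κ) := by
  have := mul_le_mul_of_nonneg_left hxy.2 hlam
  linarith [hxy.1]

/-- Dominance is preserved along any common remaining path, so pruning a dominated
label preserves optimality: if `φ₁ ≤ φ₂` and `u₁ ≥ u₂`, then after applying any finite
sequence of valid backward steps to both labels, `φ₁′ ≤ φ₂′` and `u₁′ ≥ u₂′`; hence
the final reduced costs satisfy `φ₁′ − λ(u₁′ − κ) ≤ φ₂′ − λ(u₂′ − κ)` for every
`λ ≥ 0` and constant `κ`. -/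
theorem dominance_preserved_along_path
    (L : List BackwardStep) (hL : ∀ step ∈ L, step.Valid)
    (φ_1 u_1 φ_2 u_2 : ℝ) (hφ : φ_1 ≤ φ_2) (hu : u_1 ≥ u_2) :
    (applyBackwardSteps L (φ_1, u_1)).1 ≤ (applyBackwardSteps L (φ_2, u_2)).1
    ∧ (applyBackwardSteps L (φ_1, u_1)).2 ≥ (applyBackwardSteps L (φ_2, u_2)).2
    ∧ ∀ lam κ : ℝ, 0 ≤ lam →
        (applyBackwardSteps L (φ_1, u_1)).1 - lam * ((applyBackwardSteps L (φ_1, u_1)).2 - κ)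
          ≤ (applyBackwardSteps L (φ_2, u_2)).1 - lam * ((applyBackwardSteps L (φ_2, u_2)).2 - κ) := by
  have hdom := isDominatedBy_applyBackwardSteps hL (x := (φ_1, u_1)) (y := (φ_2, u_2)) ⟨hφ, hu⟩
  exact ⟨hdom.1, hdom.2, fun lam κ hlam => hdom.reducedCost_le hlam κ⟩
end
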